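/- arXiv:2605.02282 — 10 statements merged into one kernel-verified Lean document; each statement's English description precedes it below -/
import Mathlib

section
/- For all real numbers θ₀, θ_c with 0 < θ₀ < θ_c and every δ ∈ (0,1), the regularized potential f₂^δ is twice continuously differentiable on all of ℝ (i.e. f₂^δ is C² on ℝ). -/
open Real Set

/-- The singular logarithmic (Flory–Huggins) entropy term
`f₂(c) = (θ₀/2)((1+c)log(1+c) + (1−c)log(1−c))`. -/
noncomputable def f2 (θ₀ c : ℝ) : ℝ :=
  θ₀ / 2 * ((1 + c) * Real.log (1 + c) + (1 - c) * Real.log (1 - c))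

/-- The regularized potential `f₂^δ` for nonnegative arguments. -/
noncomputable def f2deltaAux (θ₀ θc δ c : ℝ) : ℝ :=
  if c ≤ 1 - δ then f2 θ₀ c
  else if c ≤ 1 then
    θ₀ / (2 * δ * (2 - δ)) * (c - 1 + δ) ^ 2
      + θ₀ / 2 * Real.log (2 / δ - 1) * (c - 1 + δ) + f2 θ₀ (1 - δ)
  else if c ≤ 1 + δ then
    (θc * δ * (2 - δ) - θ₀) / (6 * δ ^ 2 * (2 - δ)) * (c - 1) ^ 3
      + θ₀ / (2 * δ * (2 - δ)) * (c - 1) ^ 2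
      + (θ₀ / (2 - δ) + θ₀ / 2 * Real.log ((2 - δ) / δ)) * (c - 1)
      + δ * θ₀ / (2 * (2 - δ)) + θ₀ * Real.log (2 - δ)
  else
    θc / 2 * (c - 1 - δ) ^ 2
      + (θc * δ / 2 + 3 * θ₀ / (2 * (2 - δ)) + θ₀ / 2 * Real.log ((2 - δ) / δ))
          * (c - 1 - δ)
      + θc * δ ^ 2 / 6 + 11 * θ₀ * δ / (6 * (2 - δ))
      + θ₀ * δ / 2 * Real.log ((2 - δ) / δ) + θ₀ * Real.log (2 - δ)

/-- The regularized potential `f₂^δ`, extended to an even function on all of `ℝ`. -/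
noncomputable def f2delta (θ₀ θc δ c : ℝ) : ℝ := f2deltaAux θ₀ θc δ |c|

/-- The explicit piecewise function `g^δ` (the derivative of `f₂^δ` for `c ≥ 0`). -/
noncomputable def gdeltaAux (θ₀ θc δ c : ℝ) : ℝ :=
  if c ≤ 1 - δ then θ₀ / 2 * Real.log ((1 + c) / (1 - c))
  else if c ≤ 1 then θ₀ / (δ * (2 - δ)) * (c - 1 + δ) + θ₀ / 2 * Real.log ((2 - δ) / δ)
  else if c ≤ 1 + δ then
    (θc * δ * (2 - δ) - θ₀) / (2 * δ ^ 2 * (2 - δ)) * (c - 1) ^ 2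
      + θ₀ / (δ * (2 - δ)) * (c - 1) + θ₀ / (2 - δ) + θ₀ / 2 * Real.log ((2 - δ) / δ)
  else θc * (c - 1 - δ) + θc * δ / 2 + 3 * θ₀ / (2 * (2 - δ))
      + θ₀ / 2 * Real.log ((2 - δ) / δ)

/-- The odd extension `g̃^δ` of `g^δ` to all of `ℝ`. -/
noncomputable def gdelta (θ₀ θc δ c : ℝ) : ℝ :=
  if 0 ≤ c then gdeltaAux θ₀ θc δ c else -gdeltaAux θ₀ θc δ (-c)

/-- The explicit piecewise function `h^δ` (the second derivative of `f₂^δ`) for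
positive arguments. -/
noncomputable def hdeltaAux (θ₀ θc δ c : ℝ) : ℝ :=
  if c ≤ 1 - δ then θ₀ / (1 - c ^ 2)
  else if c ≤ 1 then θ₀ / (δ * (2 - δ))
  else if c ≤ 1 + δ then
    (θc * δ * (2 - δ) - θ₀) / (δ ^ 2 * (2 - δ)) * (c - 1) + θ₀ / (δ * (2 - δ))
  else θc

/-- The even function `h^δ` on `ℝ`, with `h^δ(0) = θ₀`. -/
noncomputable def hdelta (θ₀ θc δ c : ℝ) : ℝ :=
  if c = 0 then θ₀ else hdeltaAux θ₀ θc δ |c|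

/-! On `(-1, ∞)`, `f2deltaAux` is glued from `f₂` and three polynomials whose values, first and
second derivatives agree at the junctions `1 - δ`, `1`, `1 + δ`; so it is `C²` there, with
derivatives `gdeltaAux` and `hdeltaAux`. Since `f₂` is even, `f₂^δ` agrees with `f2deltaAux` on
`(δ - 1, ∞)`, and an even function that is `C²` on a neighbourhood of `[0, ∞)` is `C²` on `ℝ`. -/

theorem hasDerivAt_ite_le {F : Type*} [NormedAddCommGroup F] [NormedSpace ℝ F]
    {f g f' g' : ℝ → F} {a x : ℝ}
    (hf : x ≤ a → HasDerivAt f (f' x) x) (hg : a ≤ x → HasDerivAt g (g' x) x)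
    (hfg : f a = g a) (hfg' : f' a = g' a) :
    HasDerivAt (fun y => if y ≤ a then f y else g y) (if x ≤ a then f' x else g' x) x := by
  rcases lt_trichotomy x a with hx | rfl | hx
  · rw [if_pos hx.le]
    refine (hf hx.le).congr_of_eventuallyEq ?_
    filter_upwards [Iio_mem_nhds hx] with y hy using if_pos (le_of_lt hy)
  · rw [if_pos le_rfl, ← hasDerivWithinAt_univ, ← Iic_union_Ici]
    refine .union ((hf le_rfl).hasDerivWithinAt.congr (fun y hy => if_pos hy) (if_pos le_rfl)) ?_
    refine (hfg' ▸ (hg le_rfl).hasDerivWithinAt).congr (fun y hy => ?_) (by simp [hfg])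
    rcases (mem_Ici.1 hy).eq_or_lt with rfl | hy
    · simp [hfg]
    · exact if_neg (not_le.2 hy)
  · rw [if_neg (not_le.2 hx)]
    refine (hg hx.le).congr_of_eventuallyEq ?_
    filter_upwards [Ioi_mem_nhds hx] with y hy using if_neg (not_le.2 hy)

theorem continuousAt_ite_le {α β : Type*} [TopologicalSpace α] [LinearOrder α]
    [OrderClosedTopology α] [TopologicalSpace β] {f g : α → β} {a x : α}
    (hf : x ≤ a → ContinuousAt f x) (hg : a ≤ x → ContinuousAt g x) (hfg : f a = g a) :
    ContinuousAt (fun y => if y ≤ a then f y else g y) x := by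
  rcases lt_trichotomy x a with hx | rfl | hx
  · refine (hf hx.le).congr ?_
    filter_upwards [Iio_mem_nhds hx] with y hy using (if_pos (le_of_lt hy)).symm
  · rw [← continuousWithinAt_univ, ← Iic_union_Ici]
    refine .union ((hf le_rfl).continuousWithinAt.congr (fun y hy => if_pos hy) (if_pos le_rfl))
      ((hg le_rfl).continuousWithinAt.congr (fun y hy => ?_) (by simp [hfg]))
    rcases (mem_Ici.1 hy).eq_or_lt with rfl | hy
    · simp [hfg]
    · exact if_neg (not_le.2 hy)
  · refine (hg hx.le).congr ?_
    filter_upwards [Ioi_mem_nhds hx] with y hy using (if_neg (not_le.2 hy)).symm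

theorem contDiffOn_succ_of_hasDerivAt {𝕜 F : Type*} [NontriviallyNormedField 𝕜]
    [NormedAddCommGroup F] [NormedSpace 𝕜 F] {f f' : 𝕜 → F} {s : Set 𝕜} {n : ℕ}
    (hs : IsOpen s) (hf : ∀ x ∈ s, HasDerivAt f (f' x) x) (hf' : ContDiffOn 𝕜 n f' s) :
    ContDiffOn 𝕜 (n + 1) f s := by
  rw [contDiffOn_succ_iff_deriv_of_isOpen hs]
  refine ⟨fun x hx => (hf x hx).differentiableAt.differentiableWithinAt, by simp, ?_⟩
  exact hf'.congr fun x hx => (hf x hx).deriv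

theorem ContDiffOn.contDiff_of_even {E : Type*} [NormedAddCommGroup E] [NormedSpace ℝ E]
    {f : ℝ → E} {n : WithTop ℕ∞} {a : ℝ} (ha : a < 0) (hf : ContDiffOn ℝ n f (Ioi a))
    (heven : ∀ x, f (-x) = f x) : ContDiff ℝ n f := by
  have hfa : ∀ x, a < x → ContDiffAt ℝ n f x := fun x hx => hf.contDiffAt (Ioi_mem_nhds hx)
  refine contDiff_iff_contDiffAt.2 fun x => ?_
  rcases lt_or_ge a x with hx | hx
  · exact hfa x hx
  · have hneg : f ∘ Neg.neg = f := funext heven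
    rw [← hneg]
    exact (hfa (-x) (by linarith)).comp x contDiff_neg.contDiffAt

theorem f2_neg (θ₀ x : ℝ) : f2 θ₀ (-x) = f2 θ₀ x := by
  simp only [f2, sub_neg_eq_add, ← sub_eq_add_neg]
  ring

theorem hasDerivAt_f2 (θ₀ : ℝ) {x : ℝ} (hx₁ : -1 < x) (hx₂ : x < 1) :
    HasDerivAt (f2 θ₀) (θ₀ / 2 * log ((1 + x) / (1 - x))) x := by
  have hxp : 1 + x ≠ 0 := by linarith
  have hxm : 1 - x ≠ 0 := by linarith
  have hp : HasDerivAt (fun c => 1 + c) 1 x := (hasDerivAt_id' x).const_add 1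
  have hm : HasDerivAt (fun c => 1 - c) (-1) x := (hasDerivAt_id' x).const_sub 1
  refine (((hp.mul (hp.log hxp)).add (hm.mul (hm.log hxm))).const_mul (θ₀ / 2)).congr_deriv ?_
  rw [log_div hxp hxm]
  field_simp
  ring

theorem hasDerivAt_log_one_add_div_one_sub (θ₀ : ℝ) {x : ℝ} (hx₁ : -1 < x) (hx₂ : x < 1) :
    HasDerivAt (fun c => θ₀ / 2 * log ((1 + c) / (1 - c))) (θ₀ / (1 - x ^ 2)) x := by
  have hxp : 1 + x ≠ 0 := by linarith
  have hxm : 1 - x ≠ 0 := by linarith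
  have hp : HasDerivAt (fun c => 1 + c) 1 x := (hasDerivAt_id' x).const_add 1
  have hm : HasDerivAt (fun c => 1 - c) (-1) x := (hasDerivAt_id' x).const_sub 1
  refine (((hp.fun_div hm hxm).log (div_ne_zero hxp hxm)).const_mul (θ₀ / 2)).congr_deriv ?_
  rw [show 1 - x ^ 2 = (1 + x) * (1 - x) by ring]
  field_simp
  ring

section Regularized

variable {θ₀ θc δ : ℝ}

theorem hasDerivAt_f2deltaAux (hδ : δ ∈ Ioo 0 1) {x : ℝ} (hx : -1 < x) :
    HasDerivAt (f2deltaAux θ₀ θc δ) (gdeltaAux θ₀ θc δ x) x := by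
  obtain ⟨hδ0, hδ1⟩ := hδ
  have hδ2 : 2 - δ ≠ 0 := by linarith
  have hlog : log (2 / δ - 1) = log ((2 - δ) / δ) := by congr 1; field_simp
  apply hasDerivAt_ite_le
  · exact fun _ => hasDerivAt_f2 θ₀ hx (by linarith)
  · intro _
    apply hasDerivAt_ite_le
    · intro _
      have h := ((hasDerivAt_id' x).sub_const 1).add_const δ
      refine ((((h.pow 2).const_mul _).add (h.const_mul _)).add_const _).congr_deriv ?_
      rw [hlog]
      field_simp
      ring
    · intro _
      apply hasDerivAt_ite_le
      · intro _
        have h := (hasDerivAt_id' x).sub_const 1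
        refine (((((h.pow 3).const_mul _).add ((h.pow 2).const_mul _)).add
          (h.const_mul _)).add_const _ |>.add_const _).congr_deriv ?_
        field_simp
        ring
      · intro _
        have h := ((hasDerivAt_id' x).sub_const 1).sub_const δ
        refine ((((h.pow 2).const_mul _).add (h.const_mul _)).add_const _ |>.add_const _
          |>.add_const _ |>.add_const _).congr_deriv ?_
        field_simp
        ring
      · field_simp
        ring
      · field_simp
        ring
    · rw [if_pos (by linarith), hlog, f2, log_div (by linarith) (by linarith)]
      field_simp
      ring_nf
    · rw [if_pos (by linarith)]
      field_simp
      ring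
  · rw [if_pos (by linarith)]
    ring
  · rw [if_pos (by linarith)]
    ring_nf

theorem hasDerivAt_gdeltaAux (hδ : δ ∈ Ioo 0 1) {x : ℝ} (hx : -1 < x) :
    HasDerivAt (gdeltaAux θ₀ θc δ) (hdeltaAux θ₀ θc δ x) x := by
  obtain ⟨hδ0, hδ1⟩ := hδ
  have hδ2 : 2 - δ ≠ 0 := by linarith
  apply hasDerivAt_ite_le
  · exact fun _ => hasDerivAt_log_one_add_div_one_sub θ₀ hx (by linarith)
  · intro _
    apply hasDerivAt_ite_le
    · intro _
      have h := ((hasDerivAt_id' x).sub_const 1).add_const δ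
      refine ((h.const_mul _).add_const _).congr_deriv ?_
      ring
    · intro _
      apply hasDerivAt_ite_le
      · intro _
        have h := (hasDerivAt_id' x).sub_const 1
        refine ((((h.pow 2).const_mul _).add (h.const_mul _)).add_const _
          |>.add_const _).congr_deriv ?_
        field_simp
        ring
      · intro _
        have h := ((hasDerivAt_id' x).sub_const 1).sub_const δ
        refine ((h.const_mul _).add_const _ |>.add_const _ |>.add_const _).congr_deriv ?_
        ring
      · field_simp
        ring
      · field_simp
        ring
    · rw [if_pos (by linarith)]
      field_simp
      ring
    · rw [if_pos (by linarith)]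
      ring
  · rw [if_pos (by linarith)]
    ring_nf
  · rw [if_pos (by linarith)]
    ring_nf

theorem continuousAt_hdeltaAux (hδ : δ ∈ Ioo 0 1) {x : ℝ} (hx : -1 < x) :
    ContinuousAt (hdeltaAux θ₀ θc δ) x := by
  obtain ⟨hδ0, hδ1⟩ := hδ
  have hδ2 : 2 - δ ≠ 0 := by linarith
  apply continuousAt_ite_le
  · exact fun _ => continuousAt_const.div (by fun_prop) (by nlinarith)
  · intro _
    apply continuousAt_ite_le
    · exact fun _ => continuousAt_const
    · intro _
      apply continuousAt_ite_le
      · exact fun _ => by fun_prop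
      · exact fun _ => continuousAt_const
      · field_simp
        ring
    · rw [if_pos (by linarith)]
      ring
  · rw [if_pos (by linarith)]
    ring_nf

theorem contDiffOn_f2deltaAux (hδ : δ ∈ Ioo 0 1) :
    ContDiffOn ℝ 2 (f2deltaAux θ₀ θc δ) (Ioi (-1)) :=
  contDiffOn_succ_of_hasDerivAt isOpen_Ioi (fun _ hx => hasDerivAt_f2deltaAux hδ hx) <|
    contDiffOn_succ_of_hasDerivAt isOpen_Ioi (fun _ hx => hasDerivAt_gdeltaAux hδ hx) <|
      contDiffOn_zero.2 fun _ hx => (continuousAt_hdeltaAux hδ hx).continuousWithinAt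

theorem f2delta_eqOn_f2deltaAux :
    EqOn (f2delta θ₀ θc δ) (f2deltaAux θ₀ θc δ) (Ioi (δ - 1)) := by
  intro x hx
  rcases le_or_gt 0 x with h | h
  · rw [f2delta, abs_of_nonneg h]
  · have hx' : x ≤ 1 - δ := by linarith [mem_Ioi.1 hx]
    have hx'' : -x ≤ 1 - δ := by linarith [mem_Ioi.1 hx]
    rw [f2delta, abs_of_neg h, f2deltaAux, f2deltaAux, if_pos hx', if_pos hx'', f2_neg]

end Regularized

theorem f2delta_contDiff_general (θ₀ θc δ : ℝ)
    (hδ : δ ∈ Set.Ioo (0:ℝ) 1) :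
    ContDiff ℝ 2 (f2delta θ₀ θc δ) := by
  have hAux : ContDiffOn ℝ 2 (f2deltaAux θ₀ θc δ) (Ioi (δ - 1)) :=
    (contDiffOn_f2deltaAux hδ).mono (Ioi_subset_Ioi (by linarith [hδ.1]))
  exact (hAux.congr f2delta_eqOn_f2deltaAux).contDiff_of_even (by linarith [hδ.2])
    fun x => by simp only [f2delta, abs_neg]

/-- For all `0 < θ₀ < θc` and every `δ ∈ (0,1)`, the regularized
potential `f₂^δ` is twice continuously differentiable on all of `ℝ`. -/
theorem f2delta_contDiff (θ₀ θc δ : ℝ) (hθ₀ : 0 < θ₀) (hθ : θ₀ < θc)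
    (hδ : δ ∈ Set.Ioo (0:ℝ) 1) :
    ContDiff ℝ 2 (f2delta θ₀ θc δ) :=
  f2delta_contDiff_general θ₀ θc δ hδ
end

section
/- For all real numbers θ₀, θ_c with 0 < θ₀ < θ_c and every δ ∈ (0,1), the function f₂^δ is differentiable on ℝ and its derivative equals the odd extension g̃^δ of the explicit piecewise function g^δ; that is, deriv f₂^δ(c) = g^δ(c) for every c ≥ 0 and deriv f₂^δ(c) = −g^δ(−c) for every c < 0. -/
open Real Set

/-! On `[0, ∞)`, `f₂^δ` is `f₂` on `[0, 1-δ]` followed by polynomials of degree at most three,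
written in Taylor form at the junctions `1-δ`, `1`, `1+δ` with coefficients chosen so that values
and slopes agree there. A function `if x ≤ a then f₁ x else f₂ x` whose pieces have equal values
and slopes at `a` is differentiable at `a`, so `g^δ` is the derivative of `f₂^δ` on `(-1, ∞)`.
Since `g^δ(0) = f₂'(0) = 0`, the even extension `c ↦ f₂^δ(|c|)` is still differentiable at `0`,
and its derivative is odd. -/

theorem f2_hasDerivAt (θ₀ : ℝ) {c : ℝ} (h₁ : -1 < c) (h₂ : c < 1) :
    HasDerivAt (f2 θ₀) (θ₀ / 2 * Real.log ((1 + c) / (1 - c))) c := by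
  have hp : (0 : ℝ) < 1 + c := by linarith
  have hm : (0 : ℝ) < 1 - c := by linarith
  have hu : HasDerivAt (fun y : ℝ => 1 + y) 1 c := (hasDerivAt_id c).const_add 1
  have hv : HasDerivAt (fun y : ℝ => 1 - y) (-1) c := (hasDerivAt_id c).const_sub 1
  refine (((hu.mul (hu.log hp.ne')).add (hv.mul (hv.log hm.ne'))).const_mul (θ₀ / 2)).congr_deriv ?_
  rw [Real.log_div hp.ne' hm.ne']
  field_simp
  ring

theorem hasDerivAt_cubic (a b c d x₀ x : ℝ) :
    HasDerivAt (fun y => a * (y - x₀) ^ 3 + b * (y - x₀) ^ 2 + c * (y - x₀) + d)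
      (3 * a * (x - x₀) ^ 2 + 2 * b * (x - x₀) + c) x := by
  have hu : HasDerivAt (fun y : ℝ => y - x₀) 1 x := (hasDerivAt_id x).sub_const x₀
  refine ((((hu.pow 3).const_mul a).add ((hu.pow 2).const_mul b)).add
    (hu.const_mul c)).add_const d |>.congr_deriv ?_
  norm_num
  ring

theorem hasDerivAt_ite_le_s1 {f₁ f₂ g₁ g₂ : ℝ → ℝ} {a x : ℝ}
    (h₁ : x ≤ a → HasDerivAt f₁ (g₁ x) x) (h₂ : a ≤ x → HasDerivAt f₂ (g₂ x) x)
    (hf : f₁ a = f₂ a) (hg : g₁ a = g₂ a) :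
    HasDerivAt (fun y => if y ≤ a then f₁ y else f₂ y) (if x ≤ a then g₁ x else g₂ x) x := by
  rcases lt_trichotomy x a with hx | rfl | hx
  · rw [if_pos hx.le]
    refine (h₁ hx.le).congr_of_eventuallyEq ?_
    filter_upwards [gt_mem_nhds hx] with y hy
    rw [if_pos hy.le]
  · rw [if_pos le_rfl]
    have hleft : HasDerivWithinAt (fun y => if y ≤ x then f₁ y else f₂ y) (g₁ x) (Iic x) x :=
      (h₁ le_rfl).hasDerivWithinAt.congr (fun y hy => if_pos hy) (if_pos le_rfl)
    have hright : HasDerivWithinAt (fun y => if y ≤ x then f₁ y else f₂ y) (g₁ x) (Ioi x) x :=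
      hg ▸ (h₂ le_rfl).hasDerivWithinAt.congr (fun y hy => if_neg (not_le.2 hy))
        ((if_pos le_rfl).trans hf)
    simpa only [Iic_union_Ioi, hasDerivWithinAt_univ] using hleft.union hright
  · rw [if_neg (not_le.2 hx)]
    refine (h₂ hx.le).congr_of_eventuallyEq ?_
    filter_upwards [lt_mem_nhds hx] with y hy
    rw [if_neg (not_le.2 hy)]

theorem HasDerivAt.comp_abs_of_nonneg {f : ℝ → ℝ} {f' x : ℝ} (hf : HasDerivAt f f' x)
    (hx : 0 ≤ x) (h₀ : x = 0 → f' = 0) : HasDerivAt (fun y => f |y|) f' x := by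
  rcases hx.lt_or_eq with hx | rfl
  · refine hf.congr_of_eventuallyEq ?_
    filter_upwards [lt_mem_nhds hx] with y hy
    rw [abs_of_pos hy]
  · obtain rfl := h₀ rfl
    have hright : HasDerivWithinAt (fun y => f |y|) 0 (Ici 0) 0 :=
      hf.hasDerivWithinAt.congr (fun y hy => by rw [abs_of_nonneg hy]) (by rw [abs_zero])
    have hleft : HasDerivWithinAt (fun y => f |y|) 0 (Iic 0) 0 := by
      refine ((hf.comp_of_eq 0 (hasDerivAt_neg' 0) neg_zero.symm).hasDerivWithinAt.congr
        (fun y hy => ?_) ?_).congr_deriv (by ring)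
      · rw [Function.comp_apply, abs_of_nonpos hy]
      · rw [Function.comp_apply, abs_zero, neg_zero]
    simpa only [Iic_union_Ici, hasDerivWithinAt_univ] using hleft.union hright

theorem f2_one_sub (θ₀ : ℝ) {δ : ℝ} (hδ : δ ≠ 0) (h2δ : 2 - δ ≠ 0) :
    f2 θ₀ (1 - δ) = θ₀ * Real.log (2 - δ) - θ₀ * δ / 2 * Real.log ((2 - δ) / δ) := by
  rw [f2, show 1 + (1 - δ) = 2 - δ by ring, sub_sub_cancel, Real.log_div h2δ hδ]
  ring

theorem f2deltaAux_hasDerivAt (θ₀ θc : ℝ) {δ c : ℝ} (hδ₀ : 0 < δ) (hδ₂ : δ < 2) (hc : -1 < c) :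
    HasDerivAt (f2deltaAux θ₀ θc δ) (gdeltaAux θ₀ θc δ c) c := by
  have hδ : δ ≠ 0 := hδ₀.ne'
  have h2δ : 2 - δ ≠ 0 := by linarith
  unfold f2deltaAux gdeltaAux
  rw [show 2 / δ - 1 = (2 - δ) / δ by field_simp]
  set L := Real.log ((2 - δ) / δ)
  apply hasDerivAt_ite_le_s1 (fun _ => f2_hasDerivAt θ₀ hc (by linarith))
  · intro
    apply hasDerivAt_ite_le_s1
    · intro
      refine (hasDerivAt_cubic 0 (θ₀ / (2 * δ * (2 - δ))) (θ₀ / 2 * L) (f2 θ₀ (1 - δ)) (1 - δ) c)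
        |>.congr_of_eventuallyEq (.of_forall fun y => by ring) |>.congr_deriv ?_
      field_simp
      ring
    · intro
      apply hasDerivAt_ite_le_s1
      · intro
        refine (hasDerivAt_cubic ((θc * δ * (2 - δ) - θ₀) / (6 * δ ^ 2 * (2 - δ)))
          (θ₀ / (2 * δ * (2 - δ))) (θ₀ / (2 - δ) + θ₀ / 2 * L)
          (δ * θ₀ / (2 * (2 - δ)) + θ₀ * Real.log (2 - δ)) 1 c)
          |>.congr_of_eventuallyEq (.of_forall fun y => by ring) |>.congr_deriv ?_
        field_simp
        ring
      · intro
        refine (hasDerivAt_cubic 0 (θc / 2) (θc * δ / 2 + 3 * θ₀ / (2 * (2 - δ)) + θ₀ / 2 * L)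
          (θc * δ ^ 2 / 6 + 11 * θ₀ * δ / (6 * (2 - δ)) + θ₀ * δ / 2 * L + θ₀ * Real.log (2 - δ))
          (1 + δ) c)
          |>.congr_of_eventuallyEq (.of_forall fun y => by ring) |>.congr_deriv (by ring)
      · field_simp
        ring
      · field_simp
        ring
    · simp only [if_true, show (1 : ℝ) ≤ 1 + δ by linarith]
      rw [f2_one_sub θ₀ hδ h2δ]
      field_simp
      ring
    · simp only [if_true, show (1 : ℝ) ≤ 1 + δ by linarith]
      field_simp
      ring
  · simp only [show 1 - δ ≤ 1 by linarith, if_true]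
    ring
  · simp only [show 1 - δ ≤ 1 by linarith, if_true]
    rw [show (1 + (1 - δ)) / (1 - (1 - δ)) = (2 - δ) / δ by ring_nf]
    ring

theorem f2delta_hasDeriv_general (θ₀ θc δ : ℝ) (hδ : δ ∈ Set.Ioo (0:ℝ) 1) :
    Differentiable ℝ (f2delta θ₀ θc δ) ∧
      (∀ c : ℝ, 0 ≤ c → deriv (f2delta θ₀ θc δ) c = gdeltaAux θ₀ θc δ c) ∧
      (∀ c : ℝ, c < 0 → deriv (f2delta θ₀ θc δ) c = -gdeltaAux θ₀ θc δ (-c)) := by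
  obtain ⟨hδ₀, hδ₁⟩ := hδ
  have hg₀ : gdeltaAux θ₀ θc δ 0 = 0 := by
    simp [gdeltaAux, show (0 : ℝ) ≤ 1 - δ by linarith]
  have hpos : ∀ c, 0 ≤ c → HasDerivAt (f2delta θ₀ θc δ) (gdeltaAux θ₀ θc δ c) c :=
    fun c hc => (f2deltaAux_hasDerivAt θ₀ θc hδ₀ (by linarith) (by linarith)).comp_abs_of_nonneg
      hc (by rintro rfl; exact hg₀)
  have hneg : ∀ c < 0, HasDerivAt (f2delta θ₀ θc δ) (-gdeltaAux θ₀ θc δ (-c)) c := by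
    intro c hc
    refine ((hpos (-c) (by linarith)).comp c (hasDerivAt_neg' c)).congr_deriv (mul_neg_one _)
      |>.congr_of_eventuallyEq (.of_forall fun y => ?_)
    simp only [Function.comp_apply, f2delta, abs_neg]
  have hall : ∀ c, DifferentiableAt ℝ (f2delta θ₀ θc δ) c := fun c =>
    (le_or_gt 0 c).elim (fun hc => (hpos c hc).differentiableAt)
      (fun hc => (hneg c hc).differentiableAt)
  exact ⟨hall, fun c hc => (hpos c hc).deriv, fun c hc => (hneg c hc).deriv⟩

/-- `f₂^δ` is differentiable on `ℝ` and its derivative equals the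
odd extension of the explicit piecewise function `g^δ`:
`deriv f₂^δ (c) = g^δ(c)` for `c ≥ 0` and `deriv f₂^δ (c) = −g^δ(−c)` for `c < 0`. -/
theorem f2delta_hasDeriv (θ₀ θc δ : ℝ) (hθ₀ : 0 < θ₀) (hθ : θ₀ < θc)
    (hδ : δ ∈ Set.Ioo (0:ℝ) 1) :
    Differentiable ℝ (f2delta θ₀ θc δ) ∧
      (∀ c : ℝ, 0 ≤ c → deriv (f2delta θ₀ θc δ) c = gdeltaAux θ₀ θc δ c) ∧
      (∀ c : ℝ, c < 0 → deriv (f2delta θ₀ θc δ) c = -gdeltaAux θ₀ θc δ (-c)) :=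
  f2delta_hasDeriv_general θ₀ θc δ hδ
end

section
/- There exists a constant M > 0 depending only on θ₀ and θ_c (in particular independent of δ) such that for every δ ∈ (0,1) and every real c with |c| ≤ c*, one has |g̃^δ(c) − θ_c·c| ≤ M. -/
open Real Set

/-!
The threshold `c*` is exactly the point where the logarithmic branch `(θ₀/2) log((1+c)/(1-c))`
of `g^δ` reaches `θc`. On `[0, c*]` the function `g^δ` is therefore either that branch, bounded
by `θc`, or its linear continuation on `(1-δ, 1]`, which exceeds the branch value at `1-δ ≤ c*`
by at most `θ₀ δ / (δ (2-δ)) ≤ θ₀`. Hence `|g̃^δ(c) - θc c| ≤ θ₀ + 2θc`, uniformly in `δ`.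
-/

noncomputable def cstar (θ₀ θc : ℝ) : ℝ := 1 - 2 / (1 + Real.exp (2 * θc / θ₀))

lemma cstar_lt_one (θ₀ θc : ℝ) : cstar θ₀ θc < 1 := by
  have : 0 < 2 / (1 + Real.exp (2 * θc / θ₀)) := by positivity
  unfold cstar
  linarith

lemma one_add_div_one_sub_le {c E : ℝ} (hE : 0 < 1 + E) (hc : c ≤ 1 - 2 / (1 + E)) :
    (1 + c) / (1 - c) ≤ E := by
  have htwo : 0 < 2 / (1 + E) := by positivity
  have hc' : c * (1 + E) ≤ E - 1 := by
    calc c * (1 + E) ≤ (1 - 2 / (1 + E)) * (1 + E) := by gcongr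
      _ = E - 1 := by field_simp; ring
  rw [div_le_iff₀ (by linarith)]
  linarith

lemma log_one_add_div_one_sub_nonneg {c : ℝ} (hc0 : 0 ≤ c) (hc1 : c < 1) :
    0 ≤ Real.log ((1 + c) / (1 - c)) :=
  Real.log_nonneg <| by rw [le_div_iff₀ (by linarith)]; linarith

lemma half_mul_log_one_add_div_one_sub_le_of_le_cstar {θ₀ θc c : ℝ} (hθ₀ : 0 < θ₀)
    (hc0 : -1 < c) (hc : c ≤ cstar θ₀ θc) :
    θ₀ / 2 * Real.log ((1 + c) / (1 - c)) ≤ θc := by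
  have hc1 : c < 1 := hc.trans_lt (cstar_lt_one θ₀ θc)
  have hratio : (1 + c) / (1 - c) ≤ Real.exp (2 * θc / θ₀) :=
    one_add_div_one_sub_le (by positivity) hc
  have hlog : Real.log ((1 + c) / (1 - c)) ≤ 2 * θc / θ₀ := by
    rw [← Real.log_exp (2 * θc / θ₀)]
    exact Real.log_le_log (div_pos (by linarith) (by linarith)) hratio
  calc θ₀ / 2 * Real.log ((1 + c) / (1 - c)) ≤ θ₀ / 2 * (2 * θc / θ₀) := by gcongr
    _ = θc := by field_simp

section gdeltaAux

variable {θ₀ θc δ c : ℝ}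

lemma gdeltaAux_nonneg (hθ₀ : 0 ≤ θ₀) (hδ : δ ∈ Ioo 0 1) (hc0 : 0 ≤ c) (hc1 : c ≤ 1) :
    0 ≤ gdeltaAux θ₀ θc δ c := by
  obtain ⟨hδ0, hδ1⟩ := hδ
  unfold gdeltaAux
  by_cases hbranch : c ≤ 1 - δ
  · rw [if_pos hbranch]
    exact mul_nonneg (by positivity) (log_one_add_div_one_sub_nonneg hc0 (by linarith))
  · rw [if_neg hbranch, if_pos hc1]
    have hlog : 0 ≤ Real.log ((2 - δ) / δ) :=
      Real.log_nonneg <| by rw [le_div_iff₀ hδ0]; linarith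
    have : 0 ≤ c - 1 + δ := by linarith
    have : 0 < 2 - δ := by linarith
    positivity

lemma gdeltaAux_le_of_le_cstar (hθ₀ : 0 < θ₀) (hδ : δ ∈ Ioo 0 1) (hc0 : 0 ≤ c)
    (hc : c ≤ cstar θ₀ θc) :
    gdeltaAux θ₀ θc δ c ≤ θ₀ + θc := by
  obtain ⟨hδ0, hδ1⟩ := hδ
  have hc1 : c < 1 := hc.trans_lt (cstar_lt_one θ₀ θc)
  unfold gdeltaAux
  by_cases hbranch : c ≤ 1 - δ
  · rw [if_pos hbranch]
    linarith [half_mul_log_one_add_div_one_sub_le_of_le_cstar hθ₀ (by linarith) hc]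
  · rw [if_neg hbranch, if_pos hc1.le]
    have hlinear : θ₀ / (δ * (2 - δ)) * (c - 1 + δ) ≤ θ₀ := by
      have h2δ : 1 ≤ 2 - δ := by linarith
      calc θ₀ / (δ * (2 - δ)) * (c - 1 + δ) ≤ θ₀ / (δ * (2 - δ)) * (δ * (2 - δ)) := by
            gcongr; nlinarith
        _ = θ₀ := by field_simp
    -- `(2 - δ) / δ` is the logarithmic branch's ratio at `1 - δ`, and `1 - δ < c ≤ c*`.
    have hlog : θ₀ / 2 * Real.log ((2 - δ) / δ) ≤ θc := by
      have := half_mul_log_one_add_div_one_sub_le_of_le_cstar (c := 1 - δ) hθ₀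
        (by linarith) (by linarith)
      rwa [show (1 + (1 - δ)) / (1 - (1 - δ)) = (2 - δ) / δ by ring_nf] at this
    linarith

lemma abs_gdeltaAux_le_of_le_cstar (hθ₀ : 0 < θ₀) (hδ : δ ∈ Ioo 0 1) (hc0 : 0 ≤ c)
    (hc : c ≤ cstar θ₀ θc) :
    |gdeltaAux θ₀ θc δ c| ≤ θ₀ + θc := by
  have hc1 : c ≤ 1 := (hc.trans_lt (cstar_lt_one θ₀ θc)).le
  rw [abs_of_nonneg (gdeltaAux_nonneg hθ₀.le hδ hc0 hc1)]
  exact gdeltaAux_le_of_le_cstar hθ₀ hδ hc0 hc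

end gdeltaAux

lemma abs_gdelta (θ₀ θc δ c : ℝ) : |gdelta θ₀ θc δ c| = |gdeltaAux θ₀ θc δ (|c|)| := by
  unfold gdelta
  split_ifs with hc
  · rw [abs_of_nonneg hc]
  · rw [abs_neg, abs_of_neg (not_le.mp hc)]

/-- there is `M > 0` depending only on `θ₀, θc` such that for every
`δ ∈ (0,1)` and every `c` with `|c| ≤ c* = 1 − 2/(1 + exp(2θc/θ₀))`, one has
`|g̃^δ(c) − θc·c| ≤ M`. -/
theorem gdelta_bounded_below_cstar (θ₀ θc : ℝ) (hθ₀ : 0 < θ₀) (hθ : θ₀ < θc) :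
    ∃ M : ℝ, 0 < M ∧ ∀ δ ∈ Set.Ioo (0:ℝ) 1, ∀ c : ℝ,
      |c| ≤ 1 - 2 / (1 + Real.exp (2 * θc / θ₀)) →
      |gdelta θ₀ θc δ c - θc * c| ≤ M := by
  refine ⟨θ₀ + 2 * θc, by linarith, fun δ hδ c hc => ?_⟩
  have hg : |gdelta θ₀ θc δ c| ≤ θ₀ + θc := by
    rw [abs_gdelta]
    exact abs_gdeltaAux_le_of_le_cstar hθ₀ hδ (abs_nonneg c) hc
  have hlin : |θc * c| ≤ θc := by
    have hc1 : |c| ≤ 1 := hc.trans (cstar_lt_one θ₀ θc).le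
    rw [abs_mul, abs_of_pos (by linarith)]
    nlinarith
  calc |gdelta θ₀ θc δ c - θc * c| ≤ |gdelta θ₀ θc δ c| + |θc * c| := abs_sub _ _
    _ ≤ θ₀ + 2 * θc := by linarith
end

section
/- There exists δ₀ ∈ (0,1), depending only on θ₀ and θ_c, such that for every δ ∈ (0,δ₀) and every real c with |c| > c*, one has (g̃^δ(c) − θ_c·c)·c > 0. -/
open Real Set

/-
For `c > 0` the claim reads `θc·c < g^δ(c)`, and the odd extension reduces `c < 0` to this.
Note `c* = tanh (θc/θ₀)`. On `[0, 1−δ]`, `g^δ(c) = θ₀·artanh c`, which exceeds `θc ≥ θc·c` as soon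
as `c > c*`. On the remaining branches `g^δ(c) − θc·c ≥ (θ₀/2)·log((2−δ)/δ) − 2θc`, and the
logarithm exceeds `4θc/θ₀` once `δ < exp(−4θc/θ₀)`.
-/

lemma lt_log_one_add_div_one_sub {t c : ℝ} (hc : 1 - 2 / (1 + exp t) < c) (hc1 : c < 1) :
    t < log ((1 + c) / (1 - c)) := by
  have h1E : 0 < 1 + exp t := by positivity
  have hexp : exp t < (1 + c) / (1 - c) := by
    rw [lt_div_iff₀ (by linarith)]
    rw [sub_lt_comm, lt_div_iff₀ h1E] at hc
    linarith
  exact (lt_log_iff_exp_lt ((exp_pos t).trans hexp)).2 hexp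

lemma lt_log_two_sub_div_self {K δ : ℝ} (hK : 0 ≤ K) (hδ : 0 < δ) (hδK : δ < exp (-K)) :
    K < log ((2 - δ) / δ) := by
  have hδ1 : δ < 1 := hδK.trans_le (exp_le_one_iff.2 (neg_nonpos.2 hK))
  refine (lt_log_iff_exp_lt (by apply div_pos <;> linarith)).2 ?_
  calc exp K < δ⁻¹ := (lt_inv_comm₀ hδ (exp_pos K)).1 (exp_neg K ▸ hδK)
    _ = 1 / δ := inv_eq_one_div δ
    _ ≤ (2 - δ) / δ := by gcongr; linarith

lemma one_sub_two_div_one_add_exp_nonneg {t : ℝ} (ht : 0 ≤ t) : 0 ≤ 1 - 2 / (1 + exp t) :=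
  sub_nonneg.2 ((div_le_one (by positivity)).2 (by linarith [one_le_exp ht]))

lemma gdelta_sub_mul_mul_self (θ₀ θc δ c : ℝ) :
    (gdelta θ₀ θc δ c - θc * c) * c = (gdeltaAux θ₀ θc δ |c| - θc * |c|) * |c| := by
  rcases le_or_gt 0 c with hc | hc
  · rw [gdelta, if_pos hc, abs_of_nonneg hc]
  · rw [gdelta, if_neg hc.not_ge, abs_of_neg hc]
    ring

section

variable {θ₀ θc δ c : ℝ}

lemma mul_lt_gdeltaAux_of_le_one_sub (hθ₀ : 0 < θ₀) (hθc : 0 ≤ θc) (hδ : 0 < δ)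
    (hc : 1 - 2 / (1 + exp (2 * θc / θ₀)) < c) (hcδ : c ≤ 1 - δ) :
    θc * c < gdeltaAux θ₀ θc δ c := by
  have hc1 : c < 1 := by linarith
  have hlog := lt_log_one_add_div_one_sub hc hc1
  rw [div_lt_iff₀ hθ₀] at hlog
  rw [gdeltaAux, if_pos hcδ]
  nlinarith

/-- The quadratic term of the third branch of `gdeltaAux`, with `s = c − 1`. -/
lemma neg_div_two_le_gdeltaAux_quadratic (hθ₀ : 0 < θ₀) (hθc : 0 ≤ θc) (hδ : 0 < δ) (hδ2 : δ < 2)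
    {s : ℝ} (hs : |s| ≤ δ) :
    -(θ₀ / (2 - δ)) / 2 ≤ (θc * δ * (2 - δ) - θ₀) / (2 * δ ^ 2 * (2 - δ)) * s ^ 2 := by
  have hsq : s ^ 2 ≤ δ ^ 2 := sq_le_sq.2 (hs.trans (le_abs_self δ))
  have h2δ : 0 < 2 - δ := by linarith
  rw [div_mul_eq_mul_div, le_div_iff₀ (by positivity)]
  have : -(θ₀ / (2 - δ)) / 2 * (2 * δ ^ 2 * (2 - δ)) = -θ₀ * δ ^ 2 := by field_simp
  rw [this]
  nlinarith [mul_nonneg (mul_nonneg (mul_nonneg hθc hδ.le) h2δ.le) (sq_nonneg s)]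

lemma mul_lt_gdeltaAux_of_one_sub_lt (hθ₀ : 0 < θ₀) (hθc : 0 ≤ θc) (hδ : 0 < δ) (hδ1 : δ < 1)
    (hL : 4 * θc < θ₀ * log ((2 - δ) / δ)) (hcδ : 1 - δ < c) :
    θc * c < gdeltaAux θ₀ θc δ c := by
  have h2δ : 0 < 2 - δ := by linarith
  rw [gdeltaAux, if_neg hcδ.not_ge]
  split_ifs with hc1 hc1δ
  · have : 0 ≤ θ₀ / (δ * (2 - δ)) * (c - 1 + δ) := by
      apply mul_nonneg (by positivity); linarith
    nlinarith
  · have hquad := neg_div_two_le_gdeltaAux_quadratic hθ₀ hθc hδ (by linarith)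
      (s := c - 1) (abs_le.2 ⟨by linarith, by linarith⟩)
    have : 0 ≤ θ₀ / (δ * (2 - δ)) * (c - 1) := by
      apply mul_nonneg (by positivity); linarith
    have : 0 < θ₀ / (2 - δ) := by positivity
    nlinarith
  · have : 0 < 3 * θ₀ / (2 * (2 - δ)) := by positivity
    nlinarith

lemma mul_lt_gdeltaAux (hθ₀ : 0 < θ₀) (hθc : 0 ≤ θc) (hδ : 0 < δ) (hδ1 : δ < 1)
    (hL : 4 * θc < θ₀ * log ((2 - δ) / δ)) (hc : 1 - 2 / (1 + exp (2 * θc / θ₀)) < c) :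
    θc * c < gdeltaAux θ₀ θc δ c := by
  rcases le_or_gt c (1 - δ) with hcδ | hcδ
  · exact mul_lt_gdeltaAux_of_le_one_sub hθ₀ hθc hδ hc hcδ
  · exact mul_lt_gdeltaAux_of_one_sub_lt hθ₀ hθc hδ hδ1 hL hcδ

end

/-- there exists `δ₀ ∈ (0,1)`, depending only on `θ₀, θc`, such that
for every `δ ∈ (0,δ₀)` and every `c` with `|c| > c*`, one has
`(g̃^δ(c) − θc·c)·c > 0`. -/
theorem gdelta_sign_above_cstar (θ₀ θc : ℝ) (hθ₀ : 0 < θ₀) (hθ : θ₀ < θc) :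
    ∃ δ₀ ∈ Set.Ioo (0:ℝ) 1, ∀ δ ∈ Set.Ioo (0:ℝ) δ₀, ∀ c : ℝ,
      1 - 2 / (1 + Real.exp (2 * θc / θ₀)) < |c| →
      0 < (gdelta θ₀ θc δ c - θc * c) * c := by
  have hθc : 0 < θc := hθ₀.trans hθ
  have hK : 0 < 4 * θc / θ₀ := by positivity
  have hδ₀1 : exp (-(4 * θc / θ₀)) < 1 := exp_lt_one_iff.2 (neg_neg_of_pos hK)
  refine ⟨exp (-(4 * θc / θ₀)), ⟨exp_pos _, hδ₀1⟩, ?_⟩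
  rintro δ ⟨hδ, hδδ₀⟩ c hc
  have hL : 4 * θc < θ₀ * log ((2 - δ) / δ) :=
    (div_lt_iff₀' hθ₀).1 (lt_log_two_sub_div_self hK.le hδ hδδ₀)
  have hc0 : 0 < |c| := (one_sub_two_div_one_add_exp_nonneg (by positivity)).trans_lt hc
  rw [gdelta_sub_mul_mul_self]
  exact mul_pos (sub_pos.2 (mul_lt_gdeltaAux hθ₀ hθc.le hδ (hδδ₀.trans hδ₀1) hL hc)) hc0
end

section
/- For every δ with 0 < δ ≤ 1 − √(1 − θ₀/θ_c) and every real c with √(1 − θ₀/θ_c) ≤ |c| ≤ 1+δ, one has h^δ(c) − θ_c ≥ 0. -/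
open Real Set

/-! Since `δ(2 - δ) = 1 - (1 - δ)²`, the bound on `δ` says `δ(2 - δ) ≤ θ₀ / θc`, and
`√(1 - θ₀/θc) ≤ |c|` says `1 - c² ≤ θ₀ / θc`. Hence each of the denominators `1 - c²` and
`δ(2 - δ)` is at most `θ₀ / θc`, which gives `h^δ ≥ θc` on `[0, 1]`; on `(1, 1 + δ]` the
function is affine with nonpositive slope and equals `θc` at `1 + δ`. -/

lemma mul_two_sub_le_of_le_one_sub_sqrt {δ r : ℝ} (h : δ ≤ 1 - √(1 - r)) :
    δ * (2 - δ) ≤ r := by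
  have : 1 - r ≤ (1 - δ) ^ 2 := (Real.sqrt_le_iff.1 (by linarith)).2
  nlinarith

section
variable {θ₀ θc δ : ℝ} (hθc : 0 < θc) (hδ0 : 0 < δ) (hδ2 : δ < 2)
  (hD : δ * (2 - δ) ≤ θ₀ / θc)
include hθc hδ0 hδ2 hD

lemma le_div_mul_two_sub : θc ≤ θ₀ / (δ * (2 - δ)) :=
  (le_div_comm₀ hθc (by nlinarith)).2 hD

lemma le_hdeltaAux_chord {c : ℝ} (hc : c ≤ 1 + δ) :
    θc ≤ (θc * δ * (2 - δ) - θ₀) / (δ ^ 2 * (2 - δ)) * (c - 1) + θ₀ / (δ * (2 - δ)) := by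
  have hslope : (θc * δ * (2 - δ) - θ₀) / (δ ^ 2 * (2 - δ)) ≤ 0 := by
    have : θc * (δ * (2 - δ)) ≤ θ₀ := (le_div_iff₀' hθc).1 hD
    exact div_nonpos_of_nonpos_of_nonneg (by linarith) (by positivity)
  have hchord : (θc * δ * (2 - δ) - θ₀) / (δ ^ 2 * (2 - δ)) * (c - 1) + θ₀ / (δ * (2 - δ))
      = θc + (θc * δ * (2 - δ) - θ₀) / (δ ^ 2 * (2 - δ)) * (c - (1 + δ)) := by
    field_simp [hδ0.ne', (sub_pos.2 hδ2).ne']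
    ring
  rw [hchord]
  nlinarith

lemma le_hdeltaAux {c : ℝ} (hc0 : 0 ≤ c) (hsq : 1 - θ₀ / θc ≤ c ^ 2) (hc : c ≤ 1 + δ) :
    θc ≤ hdeltaAux θ₀ θc δ c := by
  unfold hdeltaAux
  split_ifs
  · exact (le_div_comm₀ hθc (by nlinarith)).2 (by linarith)
  · exact le_div_mul_two_sub hθc hδ0 hδ2 hD
  · exact le_hdeltaAux_chord hθc hδ0 hδ2 hD hc

end

/-- for every `δ` with `0 < δ ≤ 1 − √(1 − θ₀/θc)` and every `c`
with `√(1 − θ₀/θc) ≤ |c| ≤ 1+δ`, one has `h^δ(c) − θc ≥ 0`. -/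
theorem hdelta_nonneg (θ₀ θc δ : ℝ) (hθ₀ : 0 < θ₀) (hθ : θ₀ < θc)
    (hδ0 : 0 < δ) (hδ : δ ≤ 1 - Real.sqrt (1 - θ₀ / θc)) :
    ∀ c : ℝ, Real.sqrt (1 - θ₀ / θc) ≤ |c| → |c| ≤ 1 + δ →
      0 ≤ hdelta θ₀ θc δ c - θc := by
  intro c hs hc
  have hθc : 0 < θc := hθ₀.trans hθ
  have hsqrt_pos : 0 < √(1 - θ₀ / θc) :=
    Real.sqrt_pos.2 (sub_pos.2 ((div_lt_one hθc).2 hθ))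
  have hc0 : c ≠ 0 := abs_pos.1 (hsqrt_pos.trans_le hs)
  have hδ2 : δ < 2 := by linarith
  rw [hdelta, if_neg hc0, sub_nonneg]
  exact le_hdeltaAux hθc hδ0 hδ2 (mul_two_sub_le_of_le_one_sub_sqrt hδ) (abs_nonneg c)
    ((Real.sqrt_le_left (abs_nonneg c)).1 hs) hc
end

section
/- For every δ ∈ (0,1) and every real c > 1+δ, g^δ(c) − θ_c·c = (θ₀/2)·log((2−δ)/δ) + 3θ₀/(2(2−δ)) − θ_c·(1 + δ/2); in particular this value is independent of c. Moreover, there exist δ₀ ∈ (0,1) and C > 0, depending only on θ₀ and θ_c, such that for every δ ∈ (0,δ₀) this value is positive and at most C·log(1/δ). -/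
/-!
For `c > 1 + δ` only the last branch of `g^δ` applies, and it is affine in `c` with slope `θc`,
so `g^δ(c) - θc c` is a constant `T(δ)`. For `δ ∈ (0, 1]`, `log ((2 - δ)/δ)` lies between
`log (1/δ)` and `log 2 + log (1/δ)`, while the remaining terms of `T(δ)` are bounded by
`3θ₀/2 + 3|θc|/2`; hence `T(δ) = (θ₀/2) log (1/δ) + O(1)`, which is positive and
`O(log (1/δ))` once `log (1/δ)` exceeds `1 + 3|θc|/θ₀`.
-/

open Real Set

noncomputable def gdeltaTail (θ₀ θc δ : ℝ) : ℝ :=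
  θ₀ / 2 * log ((2 - δ) / δ) + 3 * θ₀ / (2 * (2 - δ)) - θc * (1 + δ / 2)

theorem gdeltaAux_sub_mul_of_one_add_lt {θ₀ θc δ c : ℝ} (hδ : 0 ≤ δ) (hc : 1 + δ < c) :
    gdeltaAux θ₀ θc δ c - θc * c = gdeltaTail θ₀ θc δ := by
  have h₁ : ¬ c ≤ 1 - δ := by linarith
  have h₂ : ¬ c ≤ 1 := by linarith
  have h₃ : ¬ c ≤ 1 + δ := by linarith
  simp only [gdeltaAux, gdeltaTail, h₁, h₂, h₃, if_false]
  ring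

theorem log_one_div_le_log_two_sub_div {δ : ℝ} (hδ₀ : 0 < δ) (hδ₁ : δ ≤ 1) :
    log (1 / δ) ≤ log ((2 - δ) / δ) :=
  log_le_log (by positivity) (by gcongr; linarith)

theorem log_two_sub_div_le {δ : ℝ} (hδ₀ : 0 < δ) (hδ₁ : δ ≤ 1) :
    log ((2 - δ) / δ) ≤ log 2 + log (1 / δ) := by
  rw [← log_mul two_ne_zero (by positivity), mul_one_div]
  exact log_le_log (div_pos (by linarith) hδ₀) (by gcongr; linarith)

theorem lt_log_one_div_of_lt_exp_neg {δ M : ℝ} (hδ : 0 < δ) (h : δ < exp (-M)) :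
    M < log (1 / δ) := by
  rw [one_div, log_inv, lt_neg]
  exact (log_lt_iff_lt_exp hδ).2 h

theorem le_gdeltaTail {θ₀ θc δ : ℝ} (hθ₀ : 0 ≤ θ₀) (hδ₀ : 0 < δ) (hδ₁ : δ ≤ 1) :
    θ₀ / 2 * log (1 / δ) - 3 / 2 * |θc| ≤ gdeltaTail θ₀ θc δ := by
  have hlog := log_one_div_le_log_two_sub_div hδ₀ hδ₁
  have hmid : 0 ≤ 3 * θ₀ / (2 * (2 - δ)) := div_nonneg (by positivity) (by linarith)
  have hθc : θc * (1 + δ / 2) ≤ 3 / 2 * |θc| := by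
    nlinarith [abs_nonneg θc, le_abs_self θc, neg_abs_le θc]
  unfold gdeltaTail
  nlinarith

theorem gdeltaTail_le {θ₀ θc δ : ℝ} (hθ₀ : 0 ≤ θ₀) (hδ₀ : 0 < δ) (hδ₁ : δ ≤ 1) :
    gdeltaTail θ₀ θc δ ≤
      θ₀ / 2 * log (1 / δ) + (θ₀ / 2 * log 2 + 3 / 2 * θ₀ + 3 / 2 * |θc|) := by
  have hlog := log_two_sub_div_le hδ₀ hδ₁
  have hmid : 3 * θ₀ / (2 * (2 - δ)) ≤ 3 / 2 * θ₀ := by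
    rw [div_le_iff₀ (by linarith)]; nlinarith
  have hθc : -(3 / 2 * |θc|) ≤ θc * (1 + δ / 2) := by
    nlinarith [abs_nonneg θc, le_abs_self θc, neg_abs_le θc]
  unfold gdeltaTail
  nlinarith

theorem gdelta_tail_value_general (θ₀ θc : ℝ) (hθ₀ : 0 < θ₀) :
    (∀ δ ∈ Set.Ioo (0:ℝ) 1, ∀ c : ℝ, 1 + δ < c →
      gdeltaAux θ₀ θc δ c - θc * c
        = θ₀ / 2 * Real.log ((2 - δ) / δ) + 3 * θ₀ / (2 * (2 - δ))
            - θc * (1 + δ / 2)) ∧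
    ∃ δ₀ ∈ Set.Ioo (0:ℝ) 1, ∃ C : ℝ, 0 < C ∧ ∀ δ ∈ Set.Ioo (0:ℝ) δ₀,
      0 < θ₀ / 2 * Real.log ((2 - δ) / δ) + 3 * θ₀ / (2 * (2 - δ))
            - θc * (1 + δ / 2) ∧
      θ₀ / 2 * Real.log ((2 - δ) / δ) + 3 * θ₀ / (2 * (2 - δ)) - θc * (1 + δ / 2)
        ≤ C * Real.log (1 / δ) := by
  refine ⟨fun δ hδ c hc ↦ gdeltaAux_sub_mul_of_one_add_lt hδ.1.le hc, ?_⟩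
  have hδ₀₁ : exp (-(1 + 3 * |θc| / θ₀)) < 1 := exp_lt_one_iff.2 (neg_lt_zero.2 (by positivity))
  refine ⟨_, ⟨exp_pos _, hδ₀₁⟩, θ₀ / 2 * (1 + log 2) + 3 / 2 * θ₀ + 3 / 2 * |θc|, by positivity,
    fun δ ⟨hδ₀, hδ⟩ ↦ ?_⟩
  have hδ₁ : δ ≤ 1 := (hδ.trans hδ₀₁).le
  have hL := lt_log_one_div_of_lt_exp_neg hδ₀ hδ
  have hratio : 0 ≤ 3 * |θc| / θ₀ := by positivity
  have hθL : θ₀ / 2 + 3 / 2 * |θc| < θ₀ / 2 * log (1 / δ) := by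
    have : 3 * |θc| / θ₀ * θ₀ = 3 * |θc| := div_mul_cancel₀ _ hθ₀.ne'
    nlinarith
  have hlow := le_gdeltaTail (θc := θc) hθ₀.le hδ₀ hδ₁
  have hup := gdeltaTail_le (θc := θc) hθ₀.le hδ₀ hδ₁
  show 0 < gdeltaTail θ₀ θc δ ∧ gdeltaTail θ₀ θc δ ≤ _
  constructor
  · linarith
  · have hL₁ : 1 ≤ log (1 / δ) := by linarith
    have hK : 0 ≤ θ₀ / 2 * log 2 + 3 / 2 * θ₀ + 3 / 2 * |θc| := by positivity
    linarith [mul_le_mul_of_nonneg_left hL₁ hK]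

/-- for every `δ ∈ (0,1)` and every `c > 1+δ`,
`g^δ(c) − θc·c = (θ₀/2)·log((2−δ)/δ) + 3θ₀/(2(2−δ)) − θc(1 + δ/2)` (a value
independent of `c`); moreover there are `δ₀ ∈ (0,1)` and `C > 0`, depending only
on `θ₀, θc`, such that for `δ ∈ (0,δ₀)` this value is positive and at most
`C·log(1/δ)`. -/
theorem gdelta_tail_value (θ₀ θc : ℝ) (hθ₀ : 0 < θ₀) (hθ : θ₀ < θc) :
    (∀ δ ∈ Set.Ioo (0:ℝ) 1, ∀ c : ℝ, 1 + δ < c →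
      gdeltaAux θ₀ θc δ c - θc * c
        = θ₀ / 2 * Real.log ((2 - δ) / δ) + 3 * θ₀ / (2 * (2 - δ))
            - θc * (1 + δ / 2)) ∧
    ∃ δ₀ ∈ Set.Ioo (0:ℝ) 1, ∃ C : ℝ, 0 < C ∧ ∀ δ ∈ Set.Ioo (0:ℝ) δ₀,
      0 < θ₀ / 2 * Real.log ((2 - δ) / δ) + 3 * θ₀ / (2 * (2 - δ))
            - θc * (1 + δ / 2) ∧
      θ₀ / 2 * Real.log ((2 - δ) / δ) + 3 * θ₀ / (2 * (2 - δ)) - θc * (1 + δ / 2)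
        ≤ C * Real.log (1 / δ) :=
  gdelta_tail_value_general θ₀ θc hθ₀
end

section
/- There exist δ₀ ∈ (0,1) and C > 0, depending only on θ₀ and θ_c, such that for every δ ∈ (0,δ₀) and every real c with |c| > 1, one has (g̃^δ(c) − θ_c·c)² ≥ C·log(2/δ − 1). -/
open Real Set

/-!
For `c > 1` the term `θ₀/2 · log((2-δ)/δ)` built into `g^δ` is corrected only by terms bounded
below by `-2θ_c`: on `(1, 1+δ]` the quadratic part is nonnegative, and beyond `1+δ` the slope of
`g^δ` is exactly `θ_c`. Hence `g^δ(c) - θ_c c ≥ θ₀/4 · log(2/δ - 1)` once `log(2/δ - 1) ≥ 8θ_c/θ₀`,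
and squaring gives the bound with `C = (θ₀/4)²` once moreover `log(2/δ - 1) ≥ 1`. The case
`c < -1` reduces to `-c > 1` by oddness.
-/

lemma quadratic_part_gdeltaAux_nonneg {θ₀ θc δ t : ℝ} (hθ₀ : 0 ≤ θ₀) (hθc : 0 ≤ θc)
    (hδ : δ ∈ Ioo 0 2) (ht : t ∈ Icc 0 δ) :
    0 ≤ (θc * δ * (2 - δ) - θ₀) / (2 * δ ^ 2 * (2 - δ)) * t ^ 2 + θ₀ / (δ * (2 - δ)) * t := by
  obtain ⟨hδ0, hδ2⟩ := hδ
  obtain ⟨ht0, htδ⟩ := ht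
  have h2δ : 0 < 2 - δ := by linarith
  have hrepr : (θc * δ * (2 - δ) - θ₀) / (2 * δ ^ 2 * (2 - δ)) * t ^ 2 + θ₀ / (δ * (2 - δ)) * t
      = (θc * δ * (2 - δ) * t ^ 2 + θ₀ * t * (2 * δ - t)) / (2 * δ ^ 2 * (2 - δ)) := by
    field_simp
    ring
  rw [hrepr]
  have : 0 ≤ 2 * δ - t := by linarith
  positivity

lemma gdeltaAux_sub_mul_ge {θ₀ θc δ c : ℝ} (hθ₀ : 0 ≤ θ₀) (hθc : 0 ≤ θc)
    (hδ : δ ∈ Ioo 0 1) (hc : 1 < c) :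
    θ₀ / 2 * log (2 / δ - 1) - 2 * θc ≤ gdeltaAux θ₀ θc δ c - θc * c := by
  obtain ⟨hδ0, hδ1⟩ := hδ
  have h2δ : 0 < 2 - δ := by linarith
  have hlog : log ((2 - δ) / δ) = log (2 / δ - 1) := by
    congr 1
    field_simp
  rw [gdeltaAux, if_neg (by linarith), if_neg (by linarith), hlog]
  split_ifs with hcδ
  · have hquad := quadratic_part_gdeltaAux_nonneg hθ₀ hθc ⟨hδ0, by linarith⟩
      (t := c - 1) ⟨by linarith, by linarith⟩
    have : θc * (c - 1) ≤ θc := by nlinarith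
    have : 0 ≤ θ₀ / (2 - δ) := by positivity
    linarith
  · have : θc * δ ≤ θc := by nlinarith
    have : 0 ≤ 3 * θ₀ / (2 * (2 - δ)) := by positivity
    linarith

lemma gdelta_sub_mul_sq (θ₀ θc δ c : ℝ) :
    (gdelta θ₀ θc δ c - θc * c) ^ 2 = (gdeltaAux θ₀ θc δ |c| - θc * |c|) ^ 2 := by
  unfold gdelta
  split_ifs with hc
  · rw [abs_of_nonneg hc]
  · rw [abs_of_neg (not_le.mp hc)]
    ring

lemma lt_log_two_div_sub_one {M δ : ℝ} (hδ : 0 < δ) (hδM : δ < 2 / (exp M + 1)) :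
    M < log (2 / δ - 1) := by
  have hexp : exp M + 1 < 2 / δ := by
    rw [lt_div_iff₀ hδ]
    rwa [lt_div_iff₀ (by positivity), mul_comm] at hδM
  rw [lt_log_iff_exp_lt (by linarith [exp_pos M])]
  linarith

/-- there are `δ₀ ∈ (0,1)` and `C > 0`, depending only on `θ₀, θc`,
such that for every `δ ∈ (0,δ₀)` and every `c` with `|c| > 1`,
`(g̃^δ(c) − θc·c)² ≥ C·log(2/δ − 1)`. -/
theorem gdelta_singular_lower_bound (θ₀ θc : ℝ) (hθ₀ : 0 < θ₀) (hθ : θ₀ < θc) :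
    ∃ δ₀ ∈ Set.Ioo (0:ℝ) 1, ∃ C : ℝ, 0 < C ∧ ∀ δ ∈ Set.Ioo (0:ℝ) δ₀, ∀ c : ℝ,
      1 < |c| →
      C * Real.log (2 / δ - 1) ≤ (gdelta θ₀ θc δ c - θc * c) ^ 2 := by
  have hθc : 0 < θc := hθ₀.trans hθ
  set M := max 1 (8 * θc / θ₀)
  -- `δ = 2 / (exp M + 1)` is where `log (2 / δ - 1) = M`.
  have hδ₀ : 2 / (exp M + 1) < 1 := by
    have : 1 < exp M := one_lt_exp_iff.mpr (by positivity)
    rw [div_lt_one (by positivity)]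
    linarith
  refine ⟨2 / (exp M + 1), ⟨by positivity, hδ₀⟩, (θ₀ / 4) ^ 2, by positivity, ?_⟩
  rintro δ ⟨hδ0, hδM⟩ c hc
  set L := log (2 / δ - 1)
  have hML : M < L := lt_log_two_div_sub_one hδ0 hδM
  have hL1 : 1 ≤ L := (le_max_left _ _).trans hML.le
  have hθcL : 2 * θc ≤ θ₀ / 4 * L := by
    have := (le_max_right _ _).trans hML.le
    rw [div_le_iff₀ hθ₀] at this
    linarith
  have hlow : θ₀ / 4 * L ≤ gdeltaAux θ₀ θc δ |c| - θc * |c| := by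
    linarith [gdeltaAux_sub_mul_ge hθ₀.le hθc.le ⟨hδ0, hδM.trans hδ₀⟩ hc]
  rw [gdelta_sub_mul_sq]
  calc (θ₀ / 4) ^ 2 * L ≤ (θ₀ / 4 * L) ^ 2 := by nlinarith [sq_nonneg (θ₀ / 4)]
    _ ≤ _ := pow_le_pow_left₀ (by positivity) hlow 2
end

section
/- Let θ₀, θ_c be real numbers with 0 < θ₀ < θ_c and let c* = 1 − 2/(1 + exp(2θ_c/θ₀)). Then θ_c·(1 − c*) > 0 and for every c ∈ [c*, 1) one has (θ₀/2)·log((1+c)/(1−c)) − θ_c·c ≥ θ_c·(1 − c*). -/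
open Real Set

/-!
With `E = exp (2θc/θ₀)` the point `c* = 1 - 2/(1+E)` satisfies `(1+c*)/(1-c*) = E`, so the left-hand
side equals `θc (1 - c*)` at `c = c*`. On `[c*, 1)` it only grows: `log (1+c)` is increasing and
`log (1-c)` lies below its tangent at `c*`, which leaves a slope `θ₀/(2(1-c*)) - θc = θ₀(1+E)/4 - θc`,
nonnegative because `1 + exp (2x) ≥ 4x`.
-/

/-- The derivative of `f2 θ₀ c - θc * c ^ 2 / 2` on `(-1, 1)`. -/
noncomputable def fhDeriv (θ₀ θc c : ℝ) : ℝ :=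
  θ₀ / 2 * Real.log ((1 + c) / (1 - c)) - θc * c

theorem four_mul_le_one_add_exp_two_mul (x : ℝ) : 4 * x ≤ 1 + Real.exp (2 * x) := by
  have hsq : Real.exp (2 * x) = Real.exp x ^ 2 := by rw [← Real.exp_nat_mul]; norm_num
  nlinarith [Real.add_one_le_exp x, Real.exp_pos x, sq_nonneg (x - 1)]

theorem one_add_div_one_sub_eq_exp (x : ℝ) :
    (1 + (1 - 2 / (1 + Real.exp x))) / (1 - (1 - 2 / (1 + Real.exp x))) = Real.exp x := by
  have : 0 < 1 + Real.exp x := by positivity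
  field_simp
  ring

theorem log_one_add_div_one_sub_add_le {a c : ℝ} (ha : -1 < a) (hac : a ≤ c) (hc : c < 1) :
    Real.log ((1 + a) / (1 - a)) + (c - a) / (1 - a) ≤ Real.log ((1 + c) / (1 - c)) := by
  have hmono : Real.log (1 + a) ≤ Real.log (1 + c) :=
    Real.log_le_log (by linarith) (by linarith)
  have htangent : Real.log ((1 - c) / (1 - a)) ≤ (1 - c) / (1 - a) - 1 :=
    Real.log_le_sub_one_of_pos (div_pos (by linarith) (by linarith))
  rw [Real.log_div (by linarith) (by linarith), Real.log_div (by linarith) (by linarith)]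
  rw [Real.log_div (by linarith) (by linarith)] at htangent
  have hslope : (1 - c) / (1 - a) - 1 = -((c - a) / (1 - a)) := by
    field_simp [show 1 - a ≠ 0 by linarith]
    ring
  linarith

theorem fhDeriv_le_fhDeriv {θ₀ θc a c : ℝ} (hθ₀ : 0 ≤ θ₀) (ha : -1 < a)
    (hslope : 2 * θc * (1 - a) ≤ θ₀) (hac : a ≤ c) (hc : c < 1) :
    fhDeriv θ₀ θc a ≤ fhDeriv θ₀ θc c := by
  have h1a : 0 < 1 - a := by linarith
  have hlog := mul_le_mul_of_nonneg_left (log_one_add_div_one_sub_add_le ha hac hc)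
    (by positivity : 0 ≤ θ₀ / 2)
  have hgain : θc * (c - a) ≤ θ₀ / 2 * ((c - a) / (1 - a)) := by
    rw [mul_div_assoc', le_div_iff₀ h1a]
    nlinarith [sub_nonneg.mpr hac]
  unfold fhDeriv
  linarith

theorem fhDeriv_one_sub_two_div {θ₀ θc : ℝ} (hθ₀ : θ₀ ≠ 0) :
    fhDeriv θ₀ θc (1 - 2 / (1 + Real.exp (2 * θc / θ₀)))
      = θc * (1 - (1 - 2 / (1 + Real.exp (2 * θc / θ₀)))) := by
  rw [fhDeriv, one_add_div_one_sub_eq_exp, Real.log_exp]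
  field_simp

/-- with `c* = 1 − 2/(1 + exp(2θc/θ₀))` one has `θc·(1 − c*) > 0`
and `(θ₀/2)·log((1+c)/(1−c)) − θc·c ≥ θc·(1 − c*)` for every `c ∈ [c*, 1)`. -/
theorem flory_huggins_lower_bound (θ₀ θc : ℝ) (hθ₀ : 0 < θ₀) (hθ : θ₀ < θc) :
    0 < θc * (1 - (1 - 2 / (1 + Real.exp (2 * θc / θ₀)))) ∧
    ∀ c ∈ Set.Ico (1 - 2 / (1 + Real.exp (2 * θc / θ₀))) (1:ℝ),
      θc * (1 - (1 - 2 / (1 + Real.exp (2 * θc / θ₀))))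
        ≤ θ₀ / 2 * Real.log ((1 + c) / (1 - c)) - θc * c := by
  set cstar := 1 - 2 / (1 + Real.exp (2 * θc / θ₀)) with hcstar
  have hθc : 0 < θc := hθ₀.trans hθ
  have hgap : 0 < 1 - cstar := by rw [hcstar, sub_sub_cancel]; positivity
  have hlow : -1 < cstar := by
    have : 2 / (1 + Real.exp (2 * θc / θ₀)) < 2 := by
      rw [div_lt_iff₀ (by positivity)]; linarith [Real.exp_pos (2 * θc / θ₀)]
    linarith
  have hslope : 2 * θc * (1 - cstar) ≤ θ₀ := by
    have h := mul_le_mul_of_nonneg_left (four_mul_le_one_add_exp_two_mul (θc / θ₀)) hθ₀.le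
    rw [mul_left_comm, mul_div_cancel₀ _ hθ₀.ne', ← mul_div_assoc] at h
    rw [hcstar, sub_sub_cancel, mul_div_assoc', div_le_iff₀ (by positivity)]
    linarith
  refine ⟨mul_pos hθc hgap, fun c ⟨hc₁, hc₂⟩ => ?_⟩
  calc θc * (1 - cstar) = fhDeriv θ₀ θc cstar := (fhDeriv_one_sub_two_div hθ₀.ne').symm
    _ ≤ fhDeriv θ₀ θc c := fhDeriv_le_fhDeriv hθ₀.le hlow hslope hc₁ hc₂
end

section
/- For all real numbers θ₀, θ_c with 0 < θ₀ < θ_c, one has 1 − 2/(1 + exp(2θ_c/θ₀)) ≥ √(1 − θ₀/θ_c); equivalently, tanh(θ_c/θ₀) ≥ √(1 − θ₀/θ_c). -/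
open Real Set

/-! With `t = θc/θ₀`, the claim is `√(1 - 1/t) ≤ tanh t = 1 - 2/(1 + exp (2t))`, which follows from
`tanh² t = 1 - 1/cosh² t` and `t < sinh t < cosh t ≤ cosh² t`. -/

namespace Real

theorem self_le_cosh_sq (x : ℝ) : x ≤ cosh x ^ 2 := by
  rcases le_or_gt x 0 with hx | hx
  · exact hx.trans (sq_nonneg _)
  · calc x ≤ sinh x := self_le_sinh_iff.2 hx.le
      _ ≤ cosh x := (sinh_lt_cosh x).le
      _ ≤ cosh x ^ 2 := le_self_pow₀ (one_le_cosh x) two_ne_zero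

theorem tanh_sq_eq_one_sub_inv_cosh_sq (x : ℝ) : tanh x ^ 2 = 1 - (cosh x ^ 2)⁻¹ := by
  have hcosh : cosh x ≠ 0 := (cosh_pos x).ne'
  rw [tanh_eq_sinh_div_cosh, div_pow, sinh_sq]
  field_simp

theorem tanh_nonneg {x : ℝ} (hx : 0 ≤ x) : 0 ≤ tanh x := by
  rw [tanh_eq_sinh_div_cosh]
  exact div_nonneg (sinh_nonneg_iff.2 hx) (cosh_pos x).le

theorem sqrt_one_sub_inv_le_tanh {x : ℝ} (hx : 0 < x) : √(1 - x⁻¹) ≤ tanh x := by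
  refine sqrt_le_iff.2 ⟨tanh_nonneg hx.le, ?_⟩
  rw [tanh_sq_eq_one_sub_inv_cosh_sq]
  gcongr
  exact self_le_cosh_sq x

theorem tanh_eq_one_sub_two_div_one_add_exp (x : ℝ) : tanh x = 1 - 2 / (1 + exp (2 * x)) := by
  have hexp : exp (2 * x) = exp x * exp x := by rw [two_mul, exp_add]
  have hpos : 0 < exp x := exp_pos x
  rw [tanh_eq, exp_neg, hexp]
  field_simp
  ring

end Real

/-- `1 − 2/(1 + exp(2θc/θ₀)) ≥ √(1 − θ₀/θc)`; equivalently,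
`tanh(θc/θ₀) ≥ √(1 − θ₀/θc)`. -/
theorem cstar_ge_sqrt (θ₀ θc : ℝ) (hθ₀ : 0 < θ₀) (hθ : θ₀ < θc) :
    Real.sqrt (1 - θ₀ / θc) ≤ 1 - 2 / (1 + Real.exp (2 * θc / θ₀)) ∧
    Real.sqrt (1 - θ₀ / θc) ≤ Real.tanh (θc / θ₀) := by
  have hbound := sqrt_one_sub_inv_le_tanh (div_pos (hθ₀.trans hθ) hθ₀)
  rw [inv_div] at hbound
  refine ⟨?_, hbound⟩
  rwa [mul_div_assoc, ← tanh_eq_one_sub_two_div_one_add_exp]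
end

section
/- Let γ ≥ 1 be a real number and let T : [0,∞) → ℝ be nondecreasing and 1-Lipschitz (|T(x) − T(y)| ≤ |x − y| for all x, y ≥ 0). Then for all real a, b ≥ 0, (a^γ − b^γ)·(T(a) − T(b)) ≥ |T(a) − T(b)|^(γ+1). -/
open Real Set

/-! Since `T` is monotone, `T a - T b` has the sign of `a - b`, and by the Lipschitz bound its size
is at most `|a - b|`. For `b ≤ a` it therefore suffices that `(a - b) ^ γ ≤ a ^ γ - b ^ γ`, which is
the superadditivity of `x ↦ x ^ γ` on `[0, ∞)` for `γ ≥ 1`. -/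

lemma Real.sub_rpow_le_rpow_sub_rpow {p a b : ℝ} (hp : 1 ≤ p) (hb : 0 ≤ b) (hba : b ≤ a) :
    (a - b) ^ p ≤ a ^ p - b ^ p := by
  have h := Real.add_rpow_le_rpow_add (sub_nonneg.2 hba) hb hp
  rw [sub_add_cancel] at h
  linarith

lemma Real.rpow_add_one_le_rpow_sub_rpow_mul {p a b d : ℝ} (hp : 1 ≤ p) (hb : 0 ≤ b)
    (hba : b ≤ a) (hd : 0 ≤ d) (hdab : d ≤ a - b) :
    d ^ (p + 1) ≤ (a ^ p - b ^ p) * d := by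
  rw [Real.rpow_add_one' hd (by linarith)]
  gcongr
  calc d ^ p ≤ (a - b) ^ p := Real.rpow_le_rpow hd hdab (by linarith)
    _ ≤ a ^ p - b ^ p := Real.sub_rpow_le_rpow_sub_rpow hp hb hba

/-- if `γ ≥ 1` and `T : [0,∞) → ℝ` is nondecreasing and
1-Lipschitz, then for all `a, b ≥ 0`,
`(a^γ − b^γ)(T(a) − T(b)) ≥ |T(a) − T(b)|^(γ+1)`. -/
theorem truncation_monotonicity (γ : ℝ) (hγ : 1 ≤ γ) (T : ℝ → ℝ)
    (hmono : ∀ x y : ℝ, 0 ≤ x → 0 ≤ y → x ≤ y → T x ≤ T y)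
    (hlip : ∀ x y : ℝ, 0 ≤ x → 0 ≤ y → |T x - T y| ≤ |x - y|)
    (a b : ℝ) (ha : 0 ≤ a) (hb : 0 ≤ b) :
    |T a - T b| ^ (γ + 1) ≤ (a ^ γ - b ^ γ) * (T a - T b) := by
  wlog hba : b ≤ a with H
  · calc |T a - T b| ^ (γ + 1) = |T b - T a| ^ (γ + 1) := by rw [abs_sub_comm]
      _ ≤ (b ^ γ - a ^ γ) * (T b - T a) := H γ hγ T hmono hlip b a hb ha (le_of_not_ge hba)
      _ = (a ^ γ - b ^ γ) * (T a - T b) := by ring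
  have hT : 0 ≤ T a - T b := sub_nonneg.2 (hmono b a hb ha hba)
  have hTab : T a - T b ≤ a - b := by
    simpa [abs_of_nonneg hT, abs_of_nonneg (sub_nonneg.2 hba)] using hlip a b ha hb
  rw [abs_of_nonneg hT]
  exact Real.rpow_add_one_le_rpow_sub_rpow_mul hγ hb hba hT hTab
end
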